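/- Let μ and μ_n (n ≥ 1) be elements of M_O. Then μ_n → μ in M_O if and only if lim_{n→∞} μ_n(A) = μ(A) for every Borel set A ⊆ O that is bounded away from C and satisfies μ(∂A) = 0, where ∂A denotes the topological boundary of A in S. -/

import Mathlib

open MeasureTheory Metric Filter Topology Set

noncomputable section

variable {S : Type*} [MetricSpace S] [MeasurableSpace S]

/-- `A` is bounded away from `C`: `A ⊆ S \ C^r` for some `r > 0`. -/
def BddAway (C A : Set S) : Prop := ∃ r > 0, ∀ x ∈ A, r ≤ infDist x C

/-- The class `C_O` of test functions: bounded, nonnegative, continuous on `O = S \ C`,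
and vanishing on `C^r` for some `r > 0` (extended by `0` to all of `S`). -/
def IsCO (C : Set S) (f : S → ℝ) : Prop :=
  ContinuousOn f Cᶜ ∧ (∀ x, 0 ≤ f x) ∧ (∃ B : ℝ, ∀ x, f x ≤ B) ∧
    ∃ r > 0, ∀ x, infDist x C < r → f x = 0

/-- The class `M_O`: Borel measures on `O = S \ C` (i.e. giving no mass to `C`)
that are finite on `S \ C^r` for each `r > 0`. -/
def MemMO (C : Set S) (μ : Measure S) : Prop :=
  μ C = 0 ∧ ∀ r : ℝ, 0 < r → μ {x | r ≤ infDist x C} < ⊤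

/-- Convergence `μ_n → μ` in `M_O`. -/
def MOTendsto (C : Set S) (μn : ℕ → Measure S) (μ : Measure S) : Prop :=
  ∀ f : S → ℝ, IsCO C f →
    Tendsto (fun n => ∫ x, f x ∂ μn n) atTop (𝓝 (∫ x, f x ∂ μ))

/-!
Both directions localise to a set `{x | r ≤ infDist x C}`, which has finite mass. Forward: a
closed set bounded away from `C` is approximated from outside by thickened indicators, an open
one from inside by one minus the thickened indicator of its complement; these are test functions
in `C_O`, giving the limsup and liminf halves of the portmanteau argument, and `μ (∂A) = 0`
closes the gap between `interior A` and `closure A`. Backward: by the layer-cake formula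
`∫ f dν = ∫₀^∞ ν {f > t} dt`. The superlevel sets `{f > t}`, `t > 0`, are bounded away from `C`
and, for all but countably many `t`, have `μ`-null boundary. They all lie in
`{x | r' ≤ infDist x C}` for a radius `r'` whose level set of `infDist · C` is `μ`-null, so their
`μn`-masses are eventually bounded uniformly, and dominated convergence applies.
-/

open scoped ENNReal

section BoundedAway

variable {X : Type*} [MetricSpace X] {C A : Set X}

lemma infDist_ge_sub_of_mem_thickening {r δ : ℝ} (hA : ∀ x ∈ A, r ≤ infDist x C) {x : X}
    (hx : x ∈ thickening δ A) : r - δ ≤ infDist x C := by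
  obtain ⟨z, hzA, hxz⟩ := mem_thickening_iff.1 hx
  have := infDist_le_infDist_add_dist (x := z) (y := x) (s := C)
  linarith [hA z hzA, dist_comm x z]

lemma BddAway.mono {B : Set X} (hA : BddAway C A) (hBA : B ⊆ A) : BddAway C B :=
  let ⟨r, hr, hAr⟩ := hA
  ⟨r, hr, fun x hx => hAr x (hBA hx)⟩

lemma BddAway.closure (hA : BddAway C A) : BddAway C (closure A) := by
  obtain ⟨r, hr, hAr⟩ := hA
  exact ⟨r, hr, fun x hx =>
    closure_minimal hAr (isClosed_le continuous_const (continuous_infDist_pt C)) hx⟩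

lemma BddAway.subset_compl (hA : BddAway C A) : A ⊆ Cᶜ := by
  obtain ⟨r, hr, hAr⟩ := hA
  intro x hxA hxC
  linarith [hAr x hxA, infDist_zero_of_mem hxC]

lemma IsCO.continuous {f : X → ℝ} (hf : IsCO C f) : Continuous f := by
  obtain ⟨hcont, -, -, r, hr, hvan⟩ := hf
  refine continuous_iff_continuousAt.2 fun x => ?_
  rcases lt_or_ge (infDist x C) r with hx | hx
  · have hzero : f =ᶠ[𝓝 x] fun _ => 0 :=
      eventually_of_mem ((isOpen_lt (continuous_infDist_pt C) continuous_const).mem_nhds hx) hvan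
    exact continuousAt_const.congr hzero.symm
  · have hx' : x ∉ _root_.closure C := fun hxC => by
      linarith [infDist_zero_of_mem_closure hxC]
    exact hcont.continuousAt (mem_of_superset (isClosed_closure.isOpen_compl.mem_nhds hx')
      (compl_subset_compl.2 subset_closure))

lemma iUnion_diff_thickening_compl {U : Set X} (hU : IsOpen U) :
    ⋃ k : ℕ, U \ thickening (1 / (k + 1)) Uᶜ = U := by
  refine (iUnion_subset fun k => sdiff_subset).antisymm fun x hx => ?_
  have hx' : x ∉ closure Uᶜ := by rwa [closure_compl, hU.interior_eq, notMem_compl_iff]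
  simp only [closure_eq_iInter_thickening, mem_iInter, not_forall] at hx'
  obtain ⟨δ, hδ, hxδ⟩ := hx'
  obtain ⟨k, hk⟩ := exists_nat_one_div_lt hδ
  exact mem_iUnion.2 ⟨k, hx, fun hxk => hxδ (thickening_mono hk.le _ hxk)⟩

end BoundedAway

section Integrals

variable [OpensMeasurableSpace S] {C : Set S} {f : S → ℝ} {ν : Measure S}

lemma measurableSet_setOf_le_infDist (C : Set S) (r : ℝ) :
    MeasurableSet {x : S | r ≤ infDist x C} :=
  measurableSet_le measurable_const (continuous_infDist_pt C).measurable

lemma IsCO.integrable (hf : IsCO C f) (hν : MemMO C ν) : Integrable f ν := by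
  have hfm := hf.continuous.aestronglyMeasurable (μ := ν)
  obtain ⟨-, hf0, ⟨B, hB⟩, r, hr, hvan⟩ := hf
  refine Integrable.mono'
    ((integrableOn_const (hν.2 r hr).ne).integrable_indicator (measurableSet_setOf_le_infDist C r))
    hfm (Eventually.of_forall fun x => ?_)
  rw [Real.norm_of_nonneg (hf0 x)]
  by_cases hx : r ≤ infDist x C
  · simpa [indicator_of_mem (show x ∈ {x : S | r ≤ infDist x C} from hx)] using hB x
  · simp [indicator_of_notMem (show x ∉ {x : S | r ≤ infDist x C} from hx), hvan x (not_le.1 hx)]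

lemma IsCO.integral_eq_toReal_lintegral (hf : IsCO C f) :
    ∫ x, f x ∂ν = (∫⁻ x, ENNReal.ofReal (f x) ∂ν).toReal :=
  integral_eq_lintegral_of_nonneg_ae (Eventually.of_forall hf.2.1)
    hf.continuous.aestronglyMeasurable

lemma moTendsto_iff_tendsto_lintegral {μ : Measure S} {μn : ℕ → Measure S}
    (hμ : MemMO C μ) (hμn : ∀ n, MemMO C (μn n)) :
    MOTendsto C μn μ ↔ ∀ f : S → ℝ, IsCO C f →
      Tendsto (fun n => ∫⁻ x, ENNReal.ofReal (f x) ∂μn n) atTop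
        (𝓝 (∫⁻ x, ENNReal.ofReal (f x) ∂μ)) := by
  refine forall₂_congr fun f hf => ?_
  simp only [hf.integral_eq_toReal_lintegral]
  exact ENNReal.tendsto_toReal_iff (fun n => ((hf.integrable (hμn n)).lintegral_lt_top).ne)
    (hf.integrable hμ).lintegral_lt_top.ne

end Integrals

section Forward

variable [OpensMeasurableSpace S] {C : Set S} {μ : Measure S} {μn : ℕ → Measure S}

lemma MOTendsto.limsup_measure_le (h : MOTendsto C μn μ) (hμ : MemMO C μ)
    (hμn : ∀ n, MemMO C (μn n)) {F : Set S} (hF : IsClosed F) (hFC : BddAway C F) :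
    limsup (fun n => μn n F) atTop ≤ μ F := by
  obtain ⟨r, hr, hFr⟩ := hFC
  have hfin : μ (thickening (r / 2) F) ≠ ∞ :=
    ne_top_of_le_ne_top (hμ.2 (r / 2) (half_pos hr)).ne <| measure_mono fun x hx =>
      show r / 2 ≤ infDist x C by linarith [infDist_ge_sub_of_mem_thickening hFr hx]
  refine ge_of_tendsto (tendsto_measure_thickening_of_isClosed ⟨r / 2, half_pos hr, hfin⟩ hF) ?_
  filter_upwards [Ioo_mem_nhdsGT (half_pos hr)] with δ ⟨hδ, hδr⟩
  have hg : IsCO C fun x => (thickenedIndicator hδ F x : ℝ) :=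
    ⟨(NNReal.continuous_coe.comp (thickenedIndicator hδ F).continuous).continuousOn,
      fun x => NNReal.coe_nonneg _,
      ⟨1, fun x => by exact_mod_cast thickenedIndicator_le_one hδ F x⟩,
      r - δ, by linarith, fun x hx => by
        simp [thickenedIndicator_zero hδ F fun hxF => by
          linarith [infDist_ge_sub_of_mem_thickening hFr hxF]]⟩
  calc limsup (fun n => μn n F) atTop
      ≤ limsup (fun n => ∫⁻ x, (thickenedIndicator hδ F x : ℝ≥0∞) ∂μn n) atTop :=
        limsup_le_limsup (Eventually.of_forall fun n =>
          measure_le_lintegral_thickenedIndicator _ hF.measurableSet hδ)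
    _ = ∫⁻ x, (thickenedIndicator hδ F x : ℝ≥0∞) ∂μ :=
        by simpa using ((moTendsto_iff_tendsto_lintegral hμ hμn).1 h _ hg).limsup_eq
    _ ≤ ∫⁻ x, (thickening δ F).indicator 1 x ∂μ := lintegral_mono fun x => by
        by_cases hx : x ∈ thickening δ F
        · simpa [indicator_of_mem hx] using thickenedIndicator_le_one hδ F x
        · simp [indicator_of_notMem hx, thickenedIndicator_zero hδ F hx]
    _ = μ (thickening δ F) := lintegral_indicator_one isOpen_thickening.measurableSet

lemma MOTendsto.measure_diff_thickening_compl_le_liminf (h : MOTendsto C μn μ)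
    (hμ : MemMO C μ) (hμn : ∀ n, MemMO C (μn n)) {U : Set S} (hU : MeasurableSet U)
    (hUC : BddAway C U) {δ : ℝ} (hδ : 0 < δ) :
    μ (U \ thickening δ Uᶜ) ≤ liminf (fun n => μn n U) atTop := by
  obtain ⟨r, hr, hUr⟩ := hUC
  have hg1 : ∀ x ∈ Uᶜ, thickenedIndicator hδ Uᶜ x = 1 := fun x => thickenedIndicator_one hδ Uᶜ
  have hg : IsCO C fun x => 1 - (thickenedIndicator hδ Uᶜ x : ℝ) :=
    ⟨(continuous_const.sub (NNReal.continuous_coe.comp (thickenedIndicator hδ Uᶜ).continuous)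
        ).continuousOn,
      fun x => sub_nonneg.2 (by exact_mod_cast thickenedIndicator_le_one hδ Uᶜ x),
      ⟨1, fun x => by simp⟩, r, hr, fun x hx => by
        simp [hg1 x fun hxU => (hUr x hxU).not_gt hx]⟩
  calc μ (U \ thickening δ Uᶜ)
      = ∫⁻ x, (U \ thickening δ Uᶜ).indicator 1 x ∂μ :=
        (lintegral_indicator_one (hU.diff isOpen_thickening.measurableSet)).symm
    _ ≤ ∫⁻ x, ENNReal.ofReal (1 - thickenedIndicator hδ Uᶜ x) ∂μ := lintegral_mono fun x => by
        by_cases hx : x ∈ U \ thickening δ Uᶜ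
        · simp [indicator_of_mem hx, thickenedIndicator_zero hδ Uᶜ hx.2]
        · simp [indicator_of_notMem hx]
    _ = liminf (fun n => ∫⁻ x, ENNReal.ofReal (1 - thickenedIndicator hδ Uᶜ x) ∂μn n) atTop :=
        ((moTendsto_iff_tendsto_lintegral hμ hμn).1 h _ hg).liminf_eq.symm
    _ ≤ liminf (fun n => μn n U) atTop := liminf_le_liminf <| Eventually.of_forall fun n => by
        rw [← lintegral_indicator_one hU]
        refine lintegral_mono fun x => ?_
        by_cases hx : x ∈ U
        · simp [indicator_of_mem hx]
        · simp [indicator_of_notMem hx, hg1 x hx]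

lemma MOTendsto.le_liminf_measure (h : MOTendsto C μn μ) (hμ : MemMO C μ)
    (hμn : ∀ n, MemMO C (μn n)) {U : Set S} (hU : IsOpen U) (hUC : BddAway C U) :
    μ U ≤ liminf (fun n => μn n U) atTop := by
  have hmono : Monotone fun k : ℕ => U \ thickening (1 / (k + 1)) Uᶜ := fun k l hkl =>
    sdiff_subset_sdiff_right (thickening_mono (Nat.one_div_le_one_div hkl) _)
  exact le_of_tendsto' (iUnion_diff_thickening_compl hU ▸ tendsto_measure_iUnion_atTop hmono)
    fun k => h.measure_diff_thickening_compl_le_liminf hμ hμn hU.measurableSet hUC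
      Nat.one_div_pos_of_nat

lemma MOTendsto.tendsto_measure (h : MOTendsto C μn μ) (hμ : MemMO C μ)
    (hμn : ∀ n, MemMO C (μn n)) {A : Set S} (hA : BddAway C A) (hAμ : μ (frontier A) = 0) :
    Tendsto (fun n => μn n A) atTop (𝓝 (μ A)) :=
  tendsto_measure_of_le_liminf_measure_of_limsup_measure_le interior_subset subset_closure hAμ
    (h.le_liminf_measure hμ hμn isOpen_interior (hA.mono interior_subset))
    (h.limsup_measure_le hμ hμn isClosed_closure hA.closure)

end Forward

section LevelSets

variable {α : Type*} [MeasurableSpace α] {μ : Measure α} {g : α → ℝ} {a : ℝ}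

lemma ae_measure_level_set_eq_zero (hg : Measurable g) (hfin : μ {x | a < g x} ≠ ∞) :
    ∀ᵐ t ∂(volume.restrict (Ioi a)), μ {x | g x = t} = 0 := by
  have : IsFiniteMeasure (μ.restrict {x | a < g x}) := isFiniteMeasure_restrict.2 hfin
  have hc := Measure.countable_meas_level_set_pos (μ := μ.restrict {x | a < g x}) hg
  filter_upwards [ae_restrict_mem measurableSet_Ioi, ae_restrict_of_ae (hc.ae_notMem volume)]
    with t ht htc
  have hsub : {x | g x = t} ⊆ {x | a < g x} := fun x (hx : g x = t) =>
    show a < g x from hx ▸ ht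
  simpa [Measure.restrict_eq_self μ hsub] using htc

lemma exists_measure_level_set_eq_zero (hg : Measurable g) (hfin : μ {x | a < g x} ≠ ∞)
    {b : ℝ} (hab : a < b) : ∃ t ∈ Ioo a b, μ {x | g x = t} = 0 := by
  have : (ae (volume.restrict (Ioo a b))).NeBot := ae_restrict_neBot.2 (by simp [hab])
  exact ((ae_restrict_mem measurableSet_Ioo).and
    (ae_restrict_of_ae_restrict_of_subset Ioo_subset_Ioi_self
      (ae_measure_level_set_eq_zero hg hfin))).exists

end LevelSets

section Backward

variable [OpensMeasurableSpace S] {C : Set S} {μ : Measure S} {μn : ℕ → Measure S}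

lemma exists_eventually_measure_setOf_le_infDist_le (hμ : MemMO C μ)
    (h : ∀ A : Set S, MeasurableSet A → A ⊆ Cᶜ → BddAway C A → μ (frontier A) = 0 →
      Tendsto (fun n => μn n A) atTop (𝓝 (μ A)))
    {r : ℝ} (hr : 0 < r) :
    ∃ r' ∈ Ioo 0 r, μ {x | r' ≤ infDist x C} ≠ ∞ ∧
      ∀ᶠ n in atTop, μn n {x | r' ≤ infDist x C} ≤ μ {x | r' ≤ infDist x C} + 1 := by
  have hfin : μ {x | r / 2 < infDist x C} ≠ ∞ :=
    ne_top_of_le_ne_top (hμ.2 (r / 2) (half_pos hr)).ne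
      (measure_mono (ofPred_subset_ofPred.2 fun _ => le_of_lt))
  obtain ⟨r', ⟨hr'1, hr'2⟩, hr'0⟩ :=
    exists_measure_level_set_eq_zero (continuous_infDist_pt C).measurable hfin (half_lt_self hr)
  have hr' : 0 < r' := (half_pos hr).trans hr'1
  have hG : BddAway C {x | r' ≤ infDist x C} := ⟨r', hr', fun x hx => hx⟩
  have hGfin := (hμ.2 r' hr').ne
  refine ⟨r', ⟨hr', hr'2⟩, hGfin, ?_⟩
  have hconv := h _ (measurableSet_setOf_le_infDist C r') hG.subset_compl hG
    (measure_mono_null (frontier_le_subset_eq continuous_const (continuous_infDist_pt C))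
      (by simpa only [eq_comm] using hr'0))
  exact hconv.eventually (eventually_le_nhds (ENNReal.lt_add_right hGfin one_ne_zero))

lemma moTendsto_of_forall_tendsto_measure (hμ : MemMO C μ) (hμn : ∀ n, MemMO C (μn n))
    (h : ∀ A : Set S, MeasurableSet A → A ⊆ Cᶜ → BddAway C A → μ (frontier A) = 0 →
      Tendsto (fun n => μn n A) atTop (𝓝 (μ A))) :
    MOTendsto C μn μ := by
  refine (moTendsto_iff_tendsto_lintegral hμ hμn).2 fun f hf => ?_
  have hfc := hf.continuous
  obtain ⟨-, hf0, ⟨B, hB⟩, r, hr, hvan⟩ := hf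
  have hsuper : ∀ t, 0 ≤ t → {x | t < f x} ⊆ {x | r ≤ infDist x C} := fun t ht x hx =>
    not_lt.1 fun hxr => (show t < f x from hx).not_ge (hvan x hxr ▸ ht)
  obtain ⟨r', ⟨-, hr'r⟩, hGfin, hbound⟩ := exists_eventually_measure_setOf_le_infDist_le hμ h hr
  have hnull := ae_measure_level_set_eq_zero hfc.measurable (a := 0)
    (ne_top_of_le_ne_top (hμ.2 r hr).ne (measure_mono (hsuper 0 le_rfl)))
  simp only [lintegral_eq_lintegral_meas_lt _ (Eventually.of_forall hf0) hfc.aemeasurable]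
  refine tendsto_lintegral_filter_of_dominated_convergence
    ((Iio B).indicator fun _ => μ {x | r' ≤ infDist x C} + 1)
    (Eventually.of_forall fun n => Antitone.measurable fun s t hst =>
      measure_mono fun x hx => lt_of_le_of_lt hst hx) ?_ ?_ ?_
  · filter_upwards [hbound] with n hn
    filter_upwards [ae_restrict_mem measurableSet_Ioi] with t (ht : 0 < t)
    by_cases htB : t < B
    · rw [indicator_of_mem (mem_Iio.2 htB)]
      exact (measure_mono fun x hx => hr'r.le.trans (hsuper t ht.le hx)).trans hn
    · have hempty : {x | t < f x} = ∅ :=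
        eq_empty_of_forall_notMem fun x hx => htB ((show t < f x from hx).trans_le (hB x))
      simp [hempty]
  · rw [lintegral_indicator_const measurableSet_Iio, Measure.restrict_apply measurableSet_Iio,
      Iio_inter_Ioi, Real.volume_Ioo]
    exact ENNReal.mul_ne_top (ENNReal.add_ne_top.2 ⟨hGfin, ENNReal.one_ne_top⟩)
      ENNReal.ofReal_ne_top
  · filter_upwards [hnull, ae_restrict_mem measurableSet_Ioi] with t ht0 (ht : 0 < t)
    have hA : BddAway C {x | t < f x} := ⟨r, hr, hsuper t ht.le⟩
    exact h _ (measurableSet_lt measurable_const hfc.measurable) hA.subset_compl hA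
      (measure_mono_null (frontier_lt_subset_eq continuous_const hfc)
        (by simpa only [eq_comm] using ht0))

end Backward

theorem stmt2_general [BorelSpace S]
    (C : Set S)
    (μ : Measure S) (μn : ℕ → Measure S)
    (hμ : MemMO C μ) (hμn : ∀ n, MemMO C (μn n)) :
    MOTendsto C μn μ ↔
      ∀ A : Set S, MeasurableSet A → A ⊆ Cᶜ → BddAway C A → μ (frontier A) = 0 →
        Tendsto (fun n => μn n A) atTop (𝓝 (μ A)) :=
  ⟨fun h _ _ _ hA hAμ => h.tendsto_measure hμ hμn hA hAμ,
    moTendsto_of_forall_tendsto_measure hμ hμn⟩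

/-- Portmanteau (i) ⟺ (iv): `μ_n → μ` in `M_O` iff `μ_n(A) → μ(A)` for every Borel
set `A ⊆ O` bounded away from `C` with `μ(∂A) = 0`. -/
theorem stmt2 [BorelSpace S] [CompleteSpace S] [TopologicalSpace.SeparableSpace S]
    (C : Set S) (hC : IsClosed C)
    (μ : Measure S) (μn : ℕ → Measure S)
    (hμ : MemMO C μ) (hμn : ∀ n, MemMO C (μn n)) :
    MOTendsto C μn μ ↔
      ∀ A : Set S, MeasurableSet A → A ⊆ Cᶜ → BddAway C A → μ (frontier A) = 0 →
        Tendsto (fun n => μn n A) atTop (𝓝 (μ A)) :=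
  stmt2_general C μ μn hμ hμn
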